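/- arXiv:1706.01008 — 2 statements merged into one kernel-verified Lean document; each statement's English description precedes it below -/
import Mathlib

section
/- Let n > 1 be a positive integer with F_n = D_n such that n + 1 is prime. Then for every nonnegative integer k, the integer n(n+1)^k satisfies F_{n(n+1)^k} = D_{n(n+1)^k}. -/
/-- The map `f` from the paper: `f n = n - 1` if `n` is prime, and otherwise
`f n = n - d n` where `d n = n / n.minFac` is the largest divisor `d` of `n`
with `1 < d < n`. -/
def egf (n : ℕ) : ℕ := if n.Prime then n - 1 else n - n / n.minFac

/-- `F n = {n, f n, f (f n), …, 1}`: the set of iterates of `f` starting at `n`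
(the iterates strictly decrease to `1`; we collect all positive iterates). -/
def Fset (n : ℕ) : Set ℕ := {m | 0 < m ∧ ∃ i : ℕ, egf^[i] n = m}

/-- The sum `∑_{p^k ∣ n} 1/p^k` over all prime power divisors `p^k` of `n`. -/
def ppSum (n : ℕ) : ℚ := ∑ d ∈ n.divisors.filter (fun d => IsPrimePow d), (1 : ℚ) / d

/-- A prime power pseudoperfect number: `n > 1` with `∑_{p^k ∣ n} 1/p^k + 1/n = 1`. -/
def PPPseudoperfect (n : ℕ) : Prop := 1 < n ∧ ppSum n + 1 / n = 1

/-- A prime power Giuga number: a composite `n` with `∑_{p^k ∣ n} 1/p^k - 1/n` a positive integer. -/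
def PPGiuga (n : ℕ) : Prop :=
  1 < n ∧ ¬ n.Prime ∧ ∃ m : ℕ, 0 < m ∧ ppSum n - 1 / n = m

/-- A primary pseudoperfect number: `n > 1` with `∑_{p ∣ n} 1/p + 1/n = 1`. -/
def PrimaryPseudoperfect (n : ℕ) : Prop :=
  1 < n ∧ (∑ p ∈ n.primeFactors, (1 : ℚ) / p) + 1 / n = 1

/-- A Giuga number: a composite `n` with `∑_{p ∣ n} 1/p - 1/n` a positive integer. -/
def Giuga (n : ℕ) : Prop :=
  1 < n ∧ ¬ n.Prime ∧ ∃ m : ℕ, 0 < m ∧ (∑ p ∈ n.primeFactors, (1 : ℚ) / p) - 1 / n = m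

/-- A pseudoperfect number: a positive integer that is the sum of a nonempty set of
distinct divisors `d` with `0 < d < n`. -/
def Pseudoperfect (n : ℕ) : Prop :=
  0 < n ∧ ∃ s : Finset ℕ, s ⊆ n.properDivisors ∧ s.Nonempty ∧ ∑ d ∈ s, d = n


/-!
If `q` is prime and `a.minFac ≤ q`, then `a q` has the same least prime factor as `a`, so
`f (a q) = f (a) q`. When this holds along the whole orbit of `a`, the orbit of `a q` is `q`
times the orbit of `a`, followed by the orbit of `f q`. For `q = n + 1` we have `f q = n`, so
`F (n (n+1)^(k+1)) = (n+1) F (n (n+1)^k) ∪ F n`, which is exactly how the divisors of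
`n (n+1)^(k+1)` split according to whether `n + 1` divides them.
-/

lemma egf_eq_sub_div_minFac (m : ℕ) : egf m = m - m / m.minFac := by
  unfold egf
  split_ifs with hm
  · rw [hm.minFac_eq, Nat.div_self hm.pos]
  · rfl

lemma egf_lt {m : ℕ} (hm : 1 < m) : egf m < m := by
  rw [egf_eq_sub_div_minFac]
  exact Nat.sub_lt (by omega) (Nat.div_pos (Nat.minFac_le (by omega)) (Nat.minFac_pos m))

lemma egf_pos {m : ℕ} (hm : 1 < m) : 0 < egf m := by
  rw [egf_eq_sub_div_minFac]
  have := Nat.div_lt_self (by omega : 0 < m) (Nat.minFac_prime (by omega : m ≠ 1)).one_lt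
  omega

lemma egf_prime {p : ℕ} (hp : p.Prime) : egf p = p - 1 := if_pos hp

lemma egf_mul_prime {a q : ℕ} (ha : 1 < a) (hq : q.Prime) (hle : a.minFac ≤ q) :
    egf (a * q) = egf a * q := by
  have hmin : (a * q).minFac = a.minFac := by
    have hpa := Nat.minFac_prime (by omega : a ≠ 1)
    have hpaq := Nat.minFac_prime (Nat.one_lt_mul_iff.mpr ⟨by omega, hq.pos, Or.inl ha⟩).ne'
    refine le_antisymm (Nat.minFac_le_of_dvd hpa.two_le ((Nat.minFac_dvd a).mul_right q)) ?_
    rcases hpaq.dvd_mul.mp (Nat.minFac_dvd _) with hd | hd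
    · exact Nat.minFac_le_of_dvd hpaq.two_le hd
    · rwa [(Nat.prime_dvd_prime_iff_eq hpaq hq).mp hd]
  rw [egf_eq_sub_div_minFac, egf_eq_sub_div_minFac, hmin, Nat.sub_mul,
    Nat.div_mul_right_comm (Nat.minFac_dvd a)]

lemma Fset_eq_insert {a : ℕ} (ha : 0 < a) : Fset a = insert a (Fset (egf a)) := by
  ext m
  simp only [Fset, Set.mem_ofPred_eq, Set.mem_insert_iff]
  constructor
  · rintro ⟨hm, _ | i, rfl⟩
    · exact Or.inl rfl
    · exact Or.inr ⟨hm, i, (Function.iterate_succ_apply egf i a).symm⟩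
  · rintro (rfl | ⟨hm, i, rfl⟩)
    · exact ⟨ha, 0, rfl⟩
    · exact ⟨hm, i + 1, Function.iterate_succ_apply egf i a⟩

lemma Fset_zero : Fset 0 = ∅ := by
  have hfix : egf 0 = 0 := by simp [egf_eq_sub_div_minFac]
  ext m
  simp only [Fset, Set.mem_ofPred_eq, Function.iterate_fixed hfix, Set.mem_empty_iff_false,
    iff_false]
  rintro ⟨hm, -, rfl⟩
  exact hm.false

lemma Fset_one : Fset 1 = {1} := by
  rw [Fset_eq_insert one_pos, show egf 1 = 0 by simp [egf_eq_sub_div_minFac], Fset_zero,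
    insert_empty_eq]

lemma Fset_mul_prime {q : ℕ} (hq : q.Prime) {a : ℕ} (ha : 0 < a)
    (hle : ∀ m ∈ Fset a, m.minFac ≤ q) :
    Fset (a * q) = (· * q) '' Fset a ∪ Fset (egf q) := by
  induction a using Nat.strong_induction_on with
  | _ a ih =>
    obtain rfl | ha1 : a = 1 ∨ 1 < a := by omega
    · rw [one_mul, Fset_one, Fset_eq_insert hq.pos, Set.image_singleton, one_mul,
        Set.singleton_union]
    · have hsub : Fset (egf a) ⊆ Fset a := Fset_eq_insert ha ▸ Set.subset_insert _ _
      rw [Fset_eq_insert (Nat.mul_pos ha hq.pos), egf_mul_prime ha1 hq (hle a ⟨ha, 0, rfl⟩),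
        ih _ (egf_lt ha1) (egf_pos ha1) (fun m hm => hle m (hsub hm)), Fset_eq_insert ha,
        Set.image_insert_eq, Set.insert_union]

lemma minFac_le_of_dvd_mul_pow {n q m k : ℕ} (hq : q.Prime) (hnq : n < q) (hn : 0 < n)
    (hm : m ∣ n * q ^ k) : m.minFac ≤ q := by
  obtain rfl | hm1 := eq_or_ne m 1
  · simpa using hq.one_lt.le
  have hp := Nat.minFac_prime hm1
  rcases hp.dvd_mul.mp ((Nat.minFac_dvd m).trans hm) with hd | hd
  · exact (Nat.le_of_dvd hn hd).trans hnq.le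
  · exact ((Nat.prime_dvd_prime_iff_eq hp hq).mp (hp.dvd_of_dvd_pow hd)).le

lemma coe_divisors_mul_pow_succ {n q : ℕ} (hn : 0 < n) (hq : q.Prime) (k : ℕ) :
    ((n * q ^ (k + 1)).divisors : Set ℕ) =
      (· * q) '' ((n * q ^ k).divisors : Set ℕ) ∪ (n.divisors : Set ℕ) := by
  have hk : n * q ^ k ≠ 0 := mul_ne_zero hn.ne' (pow_ne_zero k hq.ne_zero)
  have hsucc : n * q ^ (k + 1) = n * q ^ k * q := by ring
  ext d
  simp only [Set.mem_union, Set.mem_image, Finset.mem_coe, Nat.mem_divisors, hsucc]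
  constructor
  · rintro ⟨hd, -⟩
    by_cases hqd : q ∣ d
    · obtain ⟨e, rfl⟩ := hqd
      rw [mul_comm q e] at hd
      exact Or.inl ⟨e, ⟨(Nat.mul_dvd_mul_iff_right hq.pos).mp hd, hk⟩, mul_comm e q⟩
    · have hcop : d.Coprime (q ^ (k + 1)) :=
        ((hq.coprime_iff_not_dvd.mpr hqd).symm).pow_right _
      exact Or.inr ⟨hcop.dvd_of_dvd_mul_right (by rwa [hsucc]), hn.ne'⟩
  · rintro (⟨e, ⟨he, -⟩, rfl⟩ | ⟨hd, -⟩)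
    · exact ⟨mul_dvd_mul_right he q, mul_ne_zero hk hq.ne_zero⟩
    · exact ⟨hd.mul_right _ |>.mul_right _, mul_ne_zero hk hq.ne_zero⟩

theorem stmt6_general (n : ℕ) (h : Fset n = (n.divisors : Set ℕ))
    (hp : (n + 1).Prime) (k : ℕ) :
    Fset (n * (n + 1) ^ k) = ((n * (n + 1) ^ k).divisors : Set ℕ) := by
  have hn : 0 < n := Nat.succ_lt_succ_iff.mp hp.one_lt
  have hegf : egf (n + 1) = n := by rw [egf_prime hp, Nat.add_sub_cancel]
  induction k with
  | zero => simpa using h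
  | succ k ih =>
    have hle : ∀ m ∈ Fset (n * (n + 1) ^ k), m.minFac ≤ n + 1 := fun m hm => by
      rw [ih, Finset.mem_coe, Nat.mem_divisors] at hm
      exact minFac_le_of_dvd_mul_pow hp n.lt_succ_self hn hm.1
    rw [pow_succ, ← mul_assoc, Fset_mul_prime hp (Nat.mul_pos hn (pow_pos hp.pos k)) hle, hegf,
      ih, h, mul_assoc, ← pow_succ, coe_divisors_mul_pow_succ hn hp k]

/-- if `n > 1` satisfies `F n = D n` and `n + 1` is prime, then for every
`k ≥ 0`, `F (n*(n+1)^k) = D (n*(n+1)^k)`. -/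
theorem stmt6 (n : ℕ) (hn : 1 < n) (h : Fset n = (n.divisors : Set ℕ))
    (hp : (n + 1).Prime) (k : ℕ) :
    Fset (n * (n + 1) ^ k) = ((n * (n + 1) ^ k).divisors : Set ℕ) :=
  stmt6_general n h hp k
end

section
/- For every positive integer k, the number n = 2^k satisfies F_n = D_n. -/
lemma egf_two_pow (j : ℕ) : egf (2 ^ (j + 1)) = 2 ^ j := by
  rcases Nat.eq_zero_or_pos j with rfl | hj
  · norm_num [egf]
  · have hnp : ¬ (2 ^ (j + 1)).Prime := Nat.Prime.not_prime_pow (by omega)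
    unfold egf
    rw [if_neg hnp]
    have hmin : (2 ^ (j + 1)).minFac = 2 := Nat.prime_two.pow_minFac (by omega)
    rw [hmin, pow_succ, Nat.mul_div_cancel _ (by norm_num : (0:ℕ) < 2)]
    have : 2 ^ j * 2 = 2 ^ j + 2 ^ j := by ring
    omega

lemma egf_iter (k i : ℕ) (h : i ≤ k) : egf^[i] (2 ^ k) = 2 ^ (k - i) := by
  induction i with
  | zero => simp
  | succ n ih =>
    rw [Function.iterate_succ_apply', ih (by omega)]
    have : k - n = (k - (n + 1)) + 1 := by omega
    rw [this, egf_two_pow]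

lemma egf_one : egf 1 = 0 := by norm_num [egf]

lemma egf_zero : egf 0 = 0 := by norm_num [egf]

lemma egf_iter_big (k i : ℕ) (h : k < i) : egf^[i] (2 ^ k) = 0 := by
  induction i with
  | zero => omega
  | succ n ih =>
    rw [Function.iterate_succ_apply']
    rcases Nat.lt_or_ge k n with h' | h'
    · rw [ih h', egf_zero]
    · have : n = k := by omega
      subst this
      rw [egf_iter n n le_rfl]
      simp [egf_one]

/-- for every `k ≥ 1`, `n = 2^k` satisfies `F n = D n`. -/
theorem stmt16 (k : ℕ) (hk : 0 < k) :
    Fset (2 ^ k) = (((2 ^ k : ℕ)).divisors : Set ℕ) := by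
  ext m
  simp only [Fset, Set.mem_setOf_eq, Set.mem_setOf_eq, Finset.coe_sort_coe,
    Finset.mem_coe, Nat.mem_divisors]
  constructor
  · rintro ⟨hm, i, rfl⟩
    rcases Nat.lt_or_ge k i with h | h
    · rw [egf_iter_big k i h] at hm; omega
    · rw [egf_iter k i h]
      exact ⟨pow_dvd_pow 2 (by omega), by positivity⟩
  · rintro ⟨hdvd, _⟩
    obtain ⟨j, hj, rfl⟩ := (Nat.dvd_prime_pow Nat.prime_two).mp hdvd
    exact ⟨by positivity, k - j, by rw [egf_iter k (k - j) (by omega)]; congr 1; omega⟩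
end
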